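/- arXiv:1511.05330 — 11 statements merged into one kernel-verified Lean document; each statement's English description precedes it below -/
import Mathlib

section
/- Let R be a unital ring. Then R is stably finite if and only if the following holds: for all finite index types p and q and all matrices A ∈ M_{p×p}(R), B ∈ M_{p×q}(R), D ∈ M_{q×q}(R), if the block upper-triangular matrix [[A, B], [0, D]] is invertible (as an element of the ring of square matrices of size p ⊕ q over R), then both A and D are invertible. -/
/-- A unital ring is stably finite iff invertibility of a block upper-triangular matrix
implies invertibility of the diagonal blocks. -/
theorem stmt_1 (R : Type*) [Ring R] :
    (∀ (n : ℕ) (U V : Matrix (Fin n) (Fin n) R), U * V = 1 → V * U = 1) ↔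
      (∀ (p q : Type) [Fintype p] [DecidableEq p] [Fintype q] [DecidableEq q]
          (A : Matrix p p R) (B : Matrix p q R) (D : Matrix q q R),
        IsUnit (Matrix.fromBlocks A B 0 D) → IsUnit A ∧ IsUnit D) := by
  constructor
  · intro h p q _ _ _ _ A B D hT
    have sf : ∀ (m : Type) [Fintype m] [DecidableEq m] (U V : Matrix m m R),
        U * V = 1 → V * U = 1 := by
      intro m _ _ U V hUV
      let e := Fintype.equivFin m
      have h1 : (U.submatrix e.symm e.symm) * (V.submatrix e.symm e.symm) = 1 := by
        rw [Matrix.submatrix_mul_equiv, hUV, Matrix.submatrix_one_equiv]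
      have h2 := h _ _ _ h1
      have h3 := congrArg (fun M => M.submatrix e e) h2
      simpa [Matrix.submatrix_mul_equiv, Matrix.submatrix_one_equiv,
        Matrix.submatrix_submatrix] using h3
    obtain ⟨u, hu⟩ := hT
    set T : Matrix (p ⊕ q) (p ⊕ q) R := Matrix.fromBlocks A B 0 D with hTdef
    set M : Matrix (p ⊕ q) (p ⊕ q) R := Units.val u⁻¹ with hMdef
    have hMT : M * T = 1 := by rw [hMdef, ← hu]; exact u.inv_mul
    have hTM : T * M = 1 := by rw [hMdef, ← hu]; exact u.mul_inv
    rw [← Matrix.fromBlocks_toBlocks M] at hMT hTM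
    set E := M.toBlocks₁₁; set F := M.toBlocks₁₂
    set G := M.toBlocks₂₁; set H := M.toBlocks₂₂
    rw [hTdef, Matrix.fromBlocks_multiply, ← Matrix.fromBlocks_one] at hMT hTM
    have t1 : Matrix.toBlocks₁₁ (1 : Matrix (p ⊕ q) (p ⊕ q) R) = 1 := by
      rw [← Matrix.fromBlocks_one]; exact rfl
    have t2 : Matrix.toBlocks₂₂ (1 : Matrix (p ⊕ q) (p ⊕ q) R) = 1 := by
      rw [← Matrix.fromBlocks_one]; exact rfl
    have hEA : E * A = 1 := by
      have := congrArg Matrix.toBlocks₁₁ hMT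
      simpa [Matrix.toBlocks_fromBlocks₁₁, t1] using this
    have hDH : D * H = 1 := by
      have := congrArg Matrix.toBlocks₂₂ hTM
      simpa [Matrix.toBlocks_fromBlocks₂₂, t2] using this
    have hAE : A * E = 1 := sf p E A hEA
    have hHD : H * D = 1 := sf q D H hDH
    exact ⟨⟨⟨A, E, hAE, hEA⟩, rfl⟩, ⟨⟨D, H, hDH, hHD⟩, rfl⟩⟩
  · intro h n U V hUV
    have idem : V * (U * (V * U)) = V * U := by
      rw [← mul_assoc U V U, hUV, one_mul]
    have e11 : V * U + (1 - V * U) * (1 - V * U) = 1 := by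
      noncomm_ring
      rw [idem]; abel
    have e12 : V * 0 + (1 - V * U) * V = 0 := by
      rw [mul_zero, zero_add, sub_mul, one_mul, mul_assoc, hUV, mul_one, sub_self]
    have e21 : (0 : Matrix (Fin n) (Fin n) R) * U + U * (1 - V * U) = 0 := by
      rw [zero_mul, zero_add, mul_sub, mul_one, ← mul_assoc, hUV, one_mul, sub_self]
    have e22 : (0 : Matrix (Fin n) (Fin n) R) * 0 + U * V = 1 := by
      rw [zero_mul, zero_add, hUV]
    have f11 : U * V + (0 : Matrix (Fin n) (Fin n) R) * 0 = 1 := by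
      rw [mul_zero, add_zero, hUV]
    have f12 : U * (1 - V * U) + (0 : Matrix (Fin n) (Fin n) R) * U = 0 := by
      rw [zero_mul, add_zero, mul_sub, mul_one, ← mul_assoc, hUV, one_mul, sub_self]
    have f21 : (1 - V * U) * V + V * 0 = 0 := by
      rw [mul_zero, add_zero, sub_mul, one_mul, mul_assoc, hUV, mul_one, sub_self]
    have f22 : (1 - V * U) * (1 - V * U) + V * U = 1 := by
      noncomm_ring
      rw [idem]; abel
    have hTT' : Matrix.fromBlocks V (1 - V * U) 0 U *
        Matrix.fromBlocks U 0 (1 - V * U) V = 1 := by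
      rw [Matrix.fromBlocks_multiply, e11, e12, e21, e22, Matrix.fromBlocks_one]
    have hT'T : Matrix.fromBlocks U 0 (1 - V * U) V *
        Matrix.fromBlocks V (1 - V * U) 0 U = 1 := by
      rw [Matrix.fromBlocks_multiply, f11, f12, f21, f22, Matrix.fromBlocks_one]
    have key : IsUnit (Matrix.fromBlocks V (1 - V * U) 0 U) :=
      ⟨⟨_, _, hTT', hT'T⟩, rfl⟩
    obtain ⟨hV, hU⟩ := h (Fin n) (Fin n) V (1 - V * U) U key
    have : U * (V * U) = U * 1 := by rw [← mul_assoc, hUV, one_mul, mul_one]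
    exact hU.mul_left_cancel this
end

section
/- Let 𝒜 be a unital C*-algebra and φ : 𝒜 → ℂ a continuous ℂ-linear functional. Let k, N ∈ ℕ, Δ ∈ M_k(ℂ), Ξ ∈ M_{N×k}(ℂ), let P ∈ M_N(𝒜) be invertible, set r := Δ̃ + (Ξ*)˜ · P⁻¹ · Ξ̃ ∈ M_k(𝒜), and let B ∈ M_k(ℂ) be such that B̃ − r is invertible in M_k(𝒜). For ε > 0 define G_ε := [[(B−Δ)˜, −(Ξ*)˜], [−Ξ̃, (iε)•1 + P]] ∈ M_{(k+N)×(k+N)}(𝒜), where (iε)•1 is the scalar multiple of the identity of M_N(𝒜). Then G_ε is invertible for all sufficiently small ε > 0, and, as ε → 0 from the right, the upper-left k×k block of the matrix obtained by applying φ entrywise to G_ε⁻¹ converges (in M_k(ℂ)) to the k×k matrix obtained by applying φ entrywise to (B̃ − r)⁻¹. -/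
/-!
At `ε = 0` the pencil `G₀ = [[B̃ - Δ̃, -Ξ̃*], [-Ξ̃, P]]` has, relative to its invertible corner `P`,
the Schur complement `(B̃ - Δ̃) - Ξ̃* P⁻¹ Ξ̃ = B̃ - r`. Over any (noncommutative) ring, invertibility
of the corner and of the Schur complement makes a block matrix invertible, and the upper-left block
of its inverse is the inverse of the Schur complement. Units of the complete normed ring
`M_{k+N}(𝒜)` form an open set on which inversion is continuous, so `G_ε` is invertible for small
`ε` and `G_ε⁻¹ → G₀⁻¹`; applying the continuous functional `φ` entrywise gives the limit.
-/

open Matrix Filter Topology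

namespace Matrix

section Ring

variable {m n α : Type*} [Fintype m] [Fintype n] [DecidableEq m] [DecidableEq n] [Ring α]

theorem fromBlocks_eq_mul_of_invertible₂₂ (A : Matrix m m α) (B : Matrix m n α)
    (C : Matrix n m α) (D : Matrix n n α) [Invertible D] :
    fromBlocks A B C D =
      fromBlocks 1 (B * ⅟D) 0 1 * fromBlocks (A - B * ⅟D * C) 0 0 D *
        fromBlocks 1 0 (⅟D * C) 1 := by
  simp only [fromBlocks_multiply, Matrix.mul_zero, Matrix.zero_mul, add_zero, zero_add,
    Matrix.one_mul, Matrix.mul_one, Matrix.mul_invOf_cancel_left, Matrix.mul_assoc,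
    invOf_mul_self, sub_add_cancel]

theorem isUnit_fromBlocks_of_isUnit_schur {A : Matrix m m α} {B : Matrix m n α}
    {C : Matrix n m α} {D : Matrix n n α} [Invertible D] (hS : IsUnit (A - B * ⅟D * C)) :
    IsUnit (fromBlocks A B C D) := by
  have hL : IsUnit (fromBlocks 1 (B * ⅟D) 0 1 : Matrix (m ⊕ n) (m ⊕ n) α) :=
    isUnit_iff_exists.2 ⟨fromBlocks 1 (-(B * ⅟D)) 0 1, by simp [fromBlocks_multiply],
      by simp [fromBlocks_multiply]⟩
  have hU : IsUnit (fromBlocks 1 0 (⅟D * C) 1 : Matrix (m ⊕ n) (m ⊕ n) α) :=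
    isUnit_iff_exists.2 ⟨fromBlocks 1 0 (-(⅟D * C)) 1, by simp [fromBlocks_multiply],
      by simp [fromBlocks_multiply]⟩
  have hdiag : IsUnit (fromBlocks (A - B * ⅟D * C) 0 0 D) :=
    isUnit_iff_exists.2 ⟨fromBlocks (Ring.inverse (A - B * ⅟D * C)) 0 0 (⅟D),
      by simp [fromBlocks_multiply, Ring.mul_inverse_cancel _ hS],
      by simp [fromBlocks_multiply, Ring.inverse_mul_cancel _ hS]⟩
  rw [fromBlocks_eq_mul_of_invertible₂₂]
  exact (hL.mul hdiag).mul hU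

theorem toBlocks₁₁_inverse_fromBlocks {A : Matrix m m α} {B : Matrix m n α}
    {C : Matrix n m α} {D : Matrix n n α} [Invertible D] (hS : IsUnit (A - B * ⅟D * C)) :
    (Ring.inverse (fromBlocks A B C D)).toBlocks₁₁ = Ring.inverse (A - B * ⅟D * C) := by
  set X := Ring.inverse (fromBlocks A B C D)
  have hX : fromBlocks A B C D * X = 1 :=
    Ring.mul_inverse_cancel _ (isUnit_fromBlocks_of_isUnit_schur hS)
  rw [← fromBlocks_toBlocks X, fromBlocks_multiply, ← fromBlocks_one] at hX
  have h₁₁ : A * X.toBlocks₁₁ + B * X.toBlocks₂₁ = 1 := congrArg toBlocks₁₁ hX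
  have h₂₁ : C * X.toBlocks₁₁ + D * X.toBlocks₂₁ = 0 := congrArg toBlocks₂₁ hX
  have hX₂₁ : X.toBlocks₂₁ = -(⅟D * C * X.toBlocks₁₁) := by
    rw [eq_neg_iff_add_eq_zero, Matrix.mul_assoc, ← Matrix.invOf_mul_cancel_left D X.toBlocks₂₁,
      ← Matrix.mul_add, add_comm, h₂₁, Matrix.mul_zero]
  rw [← mul_one (Ring.inverse _), eq_comm, Ring.inverse_mul_eq_iff_eq_mul _ _ _ hS, ← h₁₁, hX₂₁]
  rw [Matrix.sub_mul, Matrix.mul_neg, ← sub_eq_add_neg]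
  simp only [Matrix.mul_assoc]

end Ring

section NormedRing

variable {n 𝒜 : Type*} [Fintype n] [DecidableEq n] [NormedRing 𝒜] [CompleteSpace 𝒜]

-- `linftyOpNormedRing` is only an auxiliary device: a ring norm inducing the product topology.
theorem isOpen_setOf_isUnit : IsOpen {M : Matrix n n 𝒜 | IsUnit M} := by
  let _ : NormedRing (Matrix n n 𝒜) := Matrix.linftyOpNormedRing
  have _ : HasSummableGeomSeries (Matrix n n 𝒜) :=
    @instHasSummableGeomSeriesOfCompleteSpace _ _ (inferInstanceAs (CompleteSpace (n → n → 𝒜)))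
  exact Units.isOpen

theorem continuousAt_ringInverse {M : Matrix n n 𝒜} (hM : IsUnit M) :
    ContinuousAt Ring.inverse M := by
  let _ : NormedRing (Matrix n n 𝒜) := Matrix.linftyOpNormedRing
  have _ : HasSummableGeomSeries (Matrix n n 𝒜) :=
    @instHasSummableGeomSeriesOfCompleteSpace _ _ (inferInstanceAs (CompleteSpace (n → n → 𝒜)))
  exact hM.unit_spec ▸ NormedRing.inverse_continuousAt hM.unit

theorem tendsto_toBlocks₁₁_inverse_fromBlocks {X m : Type*} [Fintype m] [DecidableEq m]
    {l : Filter X} {A : Matrix m m 𝒜} {B : Matrix m n 𝒜} {C : Matrix n m 𝒜}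
    {D : Matrix n n 𝒜} [Invertible D] {D' : X → Matrix n n 𝒜} (hD : Tendsto D' l (𝓝 D))
    (hS : IsUnit (A - B * ⅟D * C)) :
    (∀ᶠ x in l, IsUnit (fromBlocks A B C (D' x))) ∧
      Tendsto (fun x => (Ring.inverse (fromBlocks A B C (D' x))).toBlocks₁₁) l
        (𝓝 (Ring.inverse (A - B * ⅟D * C))) := by
  have hG : Tendsto (fun x => fromBlocks A B C (D' x)) l (𝓝 (fromBlocks A B C D)) :=
    ((continuous_const.matrix_fromBlocks continuous_const continuous_const
      continuous_id).tendsto D).comp hD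
  have hG_unit := isUnit_fromBlocks_of_isUnit_schur hS
  refine ⟨hG.eventually (isOpen_setOf_isUnit.mem_nhds hG_unit), ?_⟩
  rw [← toBlocks₁₁_inverse_fromBlocks hS]
  exact ((continuous_id.matrix_submatrix _ _).tendsto _).comp
    ((continuousAt_ringInverse hG_unit).tendsto.comp hG)

end NormedRing

end Matrix

theorem stmt_3_general (𝒜 : Type*) [NormedRing 𝒜]
    [NormedAlgebra ℂ 𝒜] [CompleteSpace 𝒜]
    (φ : 𝒜 →L[ℂ] ℂ) (k N : ℕ)
    (Δ : Matrix (Fin k) (Fin k) ℂ) (Ξ : Matrix (Fin N) (Fin k) ℂ)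
    (P : Matrix (Fin N) (Fin N) 𝒜) [Invertible P]
    (B : Matrix (Fin k) (Fin k) ℂ)
    (r : Matrix (Fin k) (Fin k) 𝒜)
    (hr : r = Δ.map ⇑(algebraMap ℂ 𝒜) +
        (Ξᴴ).map ⇑(algebraMap ℂ 𝒜) * ⅟P * Ξ.map ⇑(algebraMap ℂ 𝒜))
    (hB : IsUnit (B.map ⇑(algebraMap ℂ 𝒜) - r))
    (G : ℝ → Matrix (Fin k ⊕ Fin N) (Fin k ⊕ Fin N) 𝒜)
    (hG : ∀ ε : ℝ, G ε = Matrix.fromBlocks ((B - Δ).map ⇑(algebraMap ℂ 𝒜))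
        (-((Ξᴴ).map ⇑(algebraMap ℂ 𝒜))) (-(Ξ.map ⇑(algebraMap ℂ 𝒜)))
        ((Complex.I * (ε : ℂ)) • (1 : Matrix (Fin N) (Fin N) 𝒜) + P)) :
    (∀ᶠ ε : ℝ in 𝓝[>] 0, IsUnit (G ε)) ∧
      Tendsto (fun ε : ℝ => ((Ring.inverse (G ε)).map ⇑φ).toBlocks₁₁) (𝓝[>] 0)
        (𝓝 ((Ring.inverse (B.map ⇑(algebraMap ℂ 𝒜) - r)).map ⇑φ)) := by
  set ι : ℂ →+* 𝒜 := algebraMap ℂ 𝒜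
  have hSchur : (B - Δ).map ι - -(Ξᴴ.map ι) * ⅟P * -(Ξ.map ι) = B.map ι - r := by
    rw [hr, Matrix.map_sub _ (map_sub ι), sub_sub]
    simp only [Matrix.neg_mul, Matrix.mul_neg, neg_neg]
  have hP : Tendsto (fun ε : ℝ => (Complex.I * ε) • (1 : Matrix (Fin N) (Fin N) 𝒜) + P)
      (𝓝[>] 0) (𝓝 P) :=
    tendsto_nhdsWithin_of_tendsto_nhds (Continuous.tendsto' (by fun_prop) 0 P (by simp))
  obtain ⟨hG_unit, hG_lim⟩ := tendsto_toBlocks₁₁_inverse_fromBlocks hP (hSchur ▸ hB)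
  rw [hSchur] at hG_lim
  obtain rfl : G = _ := funext hG
  exact ⟨hG_unit, ((continuous_id.matrix_map φ.continuous).tendsto _).comp hG_lim⟩

/-- Part (ii) of the main representation theorem: the entrywise expectation of the upper-left
block of `G_ε⁻¹` converges, as `ε → 0⁺`, to the entrywise expectation of `(B̃ − r)⁻¹`. -/
theorem stmt_3 (𝒜 : Type*) [NormedRing 𝒜] [StarRing 𝒜] [CStarRing 𝒜]
    [NormedAlgebra ℂ 𝒜] [CompleteSpace 𝒜] [StarModule ℂ 𝒜]
    (φ : 𝒜 →L[ℂ] ℂ) (k N : ℕ)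
    (Δ : Matrix (Fin k) (Fin k) ℂ) (Ξ : Matrix (Fin N) (Fin k) ℂ)
    (P : Matrix (Fin N) (Fin N) 𝒜) [Invertible P]
    (B : Matrix (Fin k) (Fin k) ℂ)
    (r : Matrix (Fin k) (Fin k) 𝒜)
    (hr : r = Δ.map ⇑(algebraMap ℂ 𝒜) +
        (Ξᴴ).map ⇑(algebraMap ℂ 𝒜) * ⅟P * Ξ.map ⇑(algebraMap ℂ 𝒜))
    (hB : IsUnit (B.map ⇑(algebraMap ℂ 𝒜) - r))
    (G : ℝ → Matrix (Fin k ⊕ Fin N) (Fin k ⊕ Fin N) 𝒜)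
    (hG : ∀ ε : ℝ, G ε = Matrix.fromBlocks ((B - Δ).map ⇑(algebraMap ℂ 𝒜))
        (-((Ξᴴ).map ⇑(algebraMap ℂ 𝒜))) (-(Ξ.map ⇑(algebraMap ℂ 𝒜)))
        ((Complex.I * (ε : ℂ)) • (1 : Matrix (Fin N) (Fin N) 𝒜) + P)) :
    (∀ᶠ ε : ℝ in 𝓝[>] 0, IsUnit (G ε)) ∧
      Tendsto (fun ε : ℝ => ((Ring.inverse (G ε)).map ⇑φ).toBlocks₁₁) (𝓝[>] 0)
        (𝓝 ((Ring.inverse (B.map ⇑(algebraMap ℂ 𝒜) - r)).map ⇑φ)) :=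
  stmt_3_general 𝒜 φ k N Δ Ξ P B r hr hB G hG
end

section
/- Let d, d₁, g ∈ ℕ. Let J, J̃ ∈ M_d(ℝ) be symmetric matrices with J² = I and J̃² = I, let A₁,…,A_g and Ã₁,…,Ã_g ∈ M_d(ℝ) all be symmetric, and let C, C̃ ∈ M_{d₁×d}(ℝ). For a word w = (i₁,…,i_m) with letters in {1,…,g}, write (JA)^w := (J·A_{i₁})·(J·A_{i₂})···(J·A_{i_m}) (with empty product equal to I), and similarly (J̃Ã)^w. Assume: (controllability) the columns of the matrices (JA)^w·J·Cᵀ, taken over all words w, span ℝ^d, and likewise the columns of (J̃Ã)^w·J̃·C̃ᵀ span ℝ^d; (observability) the only v ∈ ℝ^d with C·(JA)^w·v = 0 for all words w is v = 0, and likewise for (C̃, J̃Ã). Suppose S ∈ M_d(ℝ) is invertible and satisfies S·J·A_j = J̃·Ã_j·S for all j = 1,…,g, S·J·Cᵀ = J̃·C̃ᵀ, and C = C̃·S. Then Sᵀ·J̃·S = J. Moreover, if J = I, then J̃ = I and S is orthogonal, i.e., Sᵀ·S = I. -/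
open Matrix

/-- The product `(J·A_{i₁})···(J·A_{i_m})` along a word `w`. -/
def wordProdJA {d g : ℕ} (J : Matrix (Fin d) (Fin d) ℝ)
    (A : Fin g → Matrix (Fin d) (Fin d) ℝ) (w : List (Fin g)) :
    Matrix (Fin d) (Fin d) ℝ :=
  (w.map fun i => J * A i).prod

/-!
Put `X := J Sᵀ J̃ S`. Transposing the intertwining relations `S J Aⱼ = J̃ Ãⱼ S` (all matrices
involved are symmetric) shows that `X` commutes with every `J Aⱼ`, hence with every word
`(JA)^w`, and `S J Cᵀ = J̃ C̃ᵀ`, `C = C̃ S` show that `X` fixes `J Cᵀ`. So `X - 1` kills every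
column of `(JA)^w J Cᵀ`, and controllability forces `X = 1`, i.e. `Sᵀ J̃ S = J X = J`.
If moreover `J = I`, then `J̃ = S Sᵀ` is positive semidefinite with `J̃² = I`, so `J̃ = I` by
uniqueness of positive square roots.
-/

theorem Matrix.eq_zero_of_mul_eq_zero_of_iSup_range_eq_top {R ι m n p : Type*} [CommSemiring R]
    [Fintype n] [Fintype p] {B : ι → Matrix n p R}
    (hB : ⨆ i, LinearMap.range (B i).mulVecLin = ⊤) {X : Matrix m n R}
    (hX : ∀ i, X * B i = 0) : X = 0 := by
  have hker : LinearMap.ker X.mulVecLin = ⊤ :=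
    eq_top_iff.2 <| hB ▸ iSup_le fun i => LinearMap.range_le_ker_iff.2 <| by
      rw [← mulVecLin_mul, hX, mulVecLin_zero]
  exact ext_iff_mulVec.2 fun v => by
    simpa using LinearMap.congr_fun (LinearMap.ker_eq_top.1 hker) v

theorem Matrix.eq_one_of_commute_of_mul_eq {R ι n p : Type*} [CommRing R] [Fintype n]
    [DecidableEq n] [Fintype p] {M : ι → Matrix n n R} {B : Matrix n p R}
    (hctrl : ⨆ w : List ι, LinearMap.range ((w.map M).prod * B).mulVecLin = ⊤)
    {X : Matrix n n R} (hM : ∀ i, Commute X (M i)) (hB : X * B = B) : X = 1 := by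
  refine sub_eq_zero.1 <| eq_zero_of_mul_eq_zero_of_iSup_range_eq_top hctrl fun w => ?_
  have hw : Commute X (w.map M).prod :=
    Commute.list_prod_right _ _ fun _ hx => by
      obtain ⟨i, -, rfl⟩ := List.mem_map.1 hx
      exact hM i
  rw [Matrix.sub_mul, ← Matrix.mul_assoc, hw.eq, Matrix.mul_assoc, hB, Matrix.one_mul, sub_self]

open scoped MatrixOrder ComplexOrder in
theorem Matrix.PosSemidef.eq_one_of_mul_self_eq_one {n 𝕜 : Type*} [Fintype n] [DecidableEq n]
    [RCLike 𝕜] {M : Matrix n n 𝕜} (hM : M.PosSemidef) (h : M * M = 1) : M = 1 :=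
  (CFC.sq_eq_sq_iff M 1 hM.nonneg zero_le_one).mp (by rw [sq, h, one_pow])

open scoped ComplexOrder in
theorem Matrix.eq_one_of_conjTranspose_mul_mul_eq_one {n 𝕜 : Type*} [Fintype n] [DecidableEq n]
    [RCLike 𝕜] {K S : Matrix n n 𝕜} (hK : K * K = 1) (hSKS : Sᴴ * K * S = 1) : K = 1 := by
  have hSSK : S * (Sᴴ * K) = 1 := mul_eq_one_comm.1 hSKS
  have hK_eq : K = S * Sᴴ := by
    calc K = S * (Sᴴ * K) * K := by rw [hSSK, one_mul]
      _ = S * Sᴴ := by rw [mul_assoc, mul_assoc, hK, mul_one]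
  exact (hK_eq ▸ posSemidef_self_mul_conjTranspose S).eq_one_of_mul_self_eq_one hK

section Intertwining

variable {R n : Type*} [CommRing R] [Fintype n] [DecidableEq n] {J Jt S : Matrix n n R}

theorem commute_mul_transpose_mul_mul_of_intertwine {A At : Matrix n n R} (hJ : Jᵀ = J)
    (hJt : Jtᵀ = Jt) (hA : Aᵀ = A) (hAt : Atᵀ = At) (hJt2 : Jt * Jt = 1)
    (hSA : S * (J * A) = Jt * At * S) : Commute (J * Sᵀ * Jt * S) (J * A) := by
  have hSAt : A * J * Sᵀ = Sᵀ * At * Jt := by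
    simpa only [transpose_mul, hJ, hJt, hA, hAt, mul_assoc] using congrArg transpose hSA
  calc J * Sᵀ * Jt * S * (J * A) = J * Sᵀ * (Jt * Jt) * At * S := by
        simp only [mul_assoc, hSA]
    _ = J * (Sᵀ * At * Jt) * Jt * S := by simp only [hJt2, mul_one, mul_assoc]
    _ = J * A * (J * Sᵀ * Jt * S) := by simp only [← hSAt, mul_assoc]

theorem mul_transpose_mul_mul_mul_of_intertwine {m : Type*} {C Ct : Matrix m n R}
    (hJt2 : Jt * Jt = 1) (hSC : S * (J * Cᵀ) = Jt * Ctᵀ) (hC : C = Ct * S) :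
    J * Sᵀ * Jt * S * (J * Cᵀ) = J * Cᵀ := by
  calc J * Sᵀ * Jt * S * (J * Cᵀ) = J * Sᵀ * (Jt * Jt) * Ctᵀ := by
        simp only [Matrix.mul_assoc, hSC]
    _ = J * Cᵀ := by rw [hJt2, mul_one, Matrix.mul_assoc, ← transpose_mul, ← hC]

end Intertwining

theorem stmt_4_general (d d₁ g : ℕ)
    (J Jt : Matrix (Fin d) (Fin d) ℝ)
    (A At : Fin g → Matrix (Fin d) (Fin d) ℝ)
    (C Ct : Matrix (Fin d₁) (Fin d) ℝ)
    (hJsym : Jᵀ = J) (hJ2 : J * J = 1)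
    (hJtsym : Jtᵀ = Jt) (hJt2 : Jt * Jt = 1)
    (hAsym : ∀ j, (A j)ᵀ = A j) (hAtsym : ∀ j, (At j)ᵀ = At j)
    (hctrl : (⨆ w : List (Fin g),
        LinearMap.range (Matrix.mulVecLin (wordProdJA J A w * J * Cᵀ))) = ⊤)
    (S : Matrix (Fin d) (Fin d) ℝ)
    (hSA : ∀ j, S * (J * A j) = Jt * At j * S)
    (hSC : S * (J * Cᵀ) = Jt * Ctᵀ)
    (hC : C = Ct * S) :
    Sᵀ * Jt * S = J ∧ (J = 1 → Jt = 1 ∧ Sᵀ * S = 1) := by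
  have hX : J * Sᵀ * Jt * S = 1 := by
    refine eq_one_of_commute_of_mul_eq (M := fun j => J * A j) (B := J * Cᵀ) ?_
      (fun j => commute_mul_transpose_mul_mul_of_intertwine hJsym hJtsym (hAsym j) (hAtsym j)
        hJt2 (hSA j))
      (mul_transpose_mul_mul_mul_of_intertwine hJt2 hSC hC)
    simpa only [wordProdJA, Matrix.mul_assoc] using hctrl
  have hmain : Sᵀ * Jt * S = J := by
    calc Sᵀ * Jt * S = J * (J * Sᵀ * Jt * S) := by simp only [← mul_assoc, hJ2, one_mul]
      _ = J := by rw [hX, mul_one]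
  refine ⟨hmain, fun hJ1 => ?_⟩
  have hSJtS : Sᴴ * Jt * S = 1 := by rw [conjTranspose_eq_transpose_of_trivial, hmain, hJ1]
  have hJt1 : Jt = 1 := eq_one_of_conjTranspose_mul_mul_eq_one hJt2 hSJtS
  exact ⟨hJt1, by simpa only [hJt1, mul_one] using hmain.trans hJ1⟩

/-- Uniqueness of minimal symmetric descriptor realizations: the similarity transform
preserves the signature matrices, `SᵀJ̃S = J`; if `J = I` then `J̃ = I` and `S` is orthogonal. -/
theorem stmt_4 (d d₁ g : ℕ)
    (J Jt : Matrix (Fin d) (Fin d) ℝ)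
    (A At : Fin g → Matrix (Fin d) (Fin d) ℝ)
    (C Ct : Matrix (Fin d₁) (Fin d) ℝ)
    (hJsym : Jᵀ = J) (hJ2 : J * J = 1)
    (hJtsym : Jtᵀ = Jt) (hJt2 : Jt * Jt = 1)
    (hAsym : ∀ j, (A j)ᵀ = A j) (hAtsym : ∀ j, (At j)ᵀ = At j)
    (hctrl : (⨆ w : List (Fin g),
        LinearMap.range (Matrix.mulVecLin (wordProdJA J A w * J * Cᵀ))) = ⊤)
    (hctrlt : (⨆ w : List (Fin g),
        LinearMap.range (Matrix.mulVecLin (wordProdJA Jt At w * Jt * Ctᵀ))) = ⊤)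
    (hobs : ∀ v : Fin d → ℝ,
      (∀ w : List (Fin g), (C * wordProdJA J A w).mulVec v = 0) → v = 0)
    (hobst : ∀ v : Fin d → ℝ,
      (∀ w : List (Fin g), (Ct * wordProdJA Jt At w).mulVec v = 0) → v = 0)
    (S : Matrix (Fin d) (Fin d) ℝ) (hS : IsUnit S)
    (hSA : ∀ j, S * (J * A j) = Jt * At j * S)
    (hSC : S * (J * Cᵀ) = Jt * Ctᵀ)
    (hC : C = Ct * S) :
    Sᵀ * Jt * S = J ∧ (J = 1 → Jt = 1 ∧ Sᵀ * S = 1) :=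
  stmt_4_general d d₁ g J Jt A At C Ct hJsym hJ2 hJtsym hJt2 hAsym hAtsym hctrl S hSA hSC hC
end

section
/- Let R be a stably finite unital ring and let p, q be finite index types. Suppose M, N ∈ M_{p×p}(R), n ∈ M_{p×q}(R), m ∈ M_{q×p}(R), and r ∈ M_{q×q}(R) satisfy M·N = 1, M·n = 0, m·N = 0, and m·n = −r. Then M and N are invertible with N = M⁻¹, and n = 0, m = 0, and r = 0. -/
/-- Over a stably finite ring: if `M·N = 1`, `M·n = 0`, `m·N = 0`, `m·n = −r`, then
`M` and `N` are mutually inverse and `n`, `m`, `r` vanish. -/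
theorem stmt_5 (R : Type*) [Ring R]
    (hsf : ∀ (j : ℕ) (U V : Matrix (Fin j) (Fin j) R), U * V = 1 → V * U = 1)
    (p q : Type*) [Fintype p] [DecidableEq p] [Fintype q] [DecidableEq q]
    (M N : Matrix p p R) (n : Matrix p q R) (m : Matrix q p R) (r : Matrix q q R)
    (h1 : M * N = 1) (h2 : M * n = 0) (h3 : m * N = 0) (h4 : m * n = -r) :
    IsUnit M ∧ IsUnit N ∧ N * M = 1 ∧ n = 0 ∧ m = 0 ∧ r = 0 := by
  have hNM : N * M = 1 := by
    let e := Fintype.equivFin p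
    have key := hsf (Fintype.card p) (Matrix.reindex e e M) (Matrix.reindex e e N)
    have h1' : Matrix.reindex e e M * Matrix.reindex e e N = 1 := by
      simp only [Matrix.reindex_apply, Matrix.submatrix_mul_equiv]
      rw [h1, Matrix.submatrix_one_equiv]
    have := key h1'
    simp only [Matrix.reindex_apply, Matrix.submatrix_mul_equiv] at this
    have heq : (N * M).submatrix ⇑e.symm ⇑e.symm =
        (1 : Matrix p p R).submatrix ⇑e.symm ⇑e.symm := by
      rw [this, Matrix.submatrix_one_equiv]
    have := congrArg (fun A => A.submatrix ⇑e ⇑e) heq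
    simpa using this
  have hn : n = 0 := by
    calc n = (N * M) * n := by rw [hNM, Matrix.one_mul]
    _ = N * (M * n) := by rw [Matrix.mul_assoc]
    _ = 0 := by rw [h2, Matrix.mul_zero]
  have hm : m = 0 := by
    calc m = m * (N * M) := by rw [hNM, Matrix.mul_one]
    _ = (m * N) * M := by rw [← Matrix.mul_assoc]
    _ = 0 := by rw [h3, Matrix.zero_mul]
  have hr : r = 0 := by
    have := h4
    rw [hn, Matrix.mul_zero] at this
    simpa using this.symm
  exact ⟨⟨⟨M, N, h1, hNM⟩, rfl⟩, ⟨⟨N, M, hNM, h1⟩, rfl⟩, hNM, hn, hm, hr⟩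
end

section
/- Let R be a stably finite unital ring and let p, q be finite index types. If the block upper-triangular matrix G = [[A, B], [0, D]] with A ∈ M_{p×p}(R), B ∈ M_{p×q}(R), D ∈ M_{q×q}(R) is invertible, then A and D are invertible and G⁻¹ = [[A⁻¹, −A⁻¹·B·D⁻¹], [0, D⁻¹]]. -/
/-- Transfer stable finiteness from `Fin j` matrices to matrices over any fintype. -/
lemma sf_general (R : Type*) [Ring R]
    (hsf : ∀ (j : ℕ) (U V : Matrix (Fin j) (Fin j) R), U * V = 1 → V * U = 1)
    (n : Type*) [Fintype n] [DecidableEq n]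
    (U V : Matrix n n R) (h : U * V = 1) : V * U = 1 := by
  let e : Fin (Fintype.card n) ≃ n := (Fintype.equivFin n).symm
  have h' : U.submatrix e e * V.submatrix e e = 1 := by
    rw [Matrix.submatrix_mul_equiv, h, Matrix.submatrix_one_equiv]
  have h2 := hsf _ _ _ h'
  rw [Matrix.submatrix_mul_equiv, ← Matrix.submatrix_one_equiv e] at h2
  have := congrArg (fun M => Matrix.submatrix M e.symm e.symm) h2
  simpa [Matrix.submatrix_submatrix] using this

/-- Over a stably finite ring, an invertible block upper-triangular matrix has invertible
diagonal blocks, and its inverse is given by the explicit block formula. -/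
theorem stmt_6 (R : Type*) [Ring R]
    (hsf : ∀ (j : ℕ) (U V : Matrix (Fin j) (Fin j) R), U * V = 1 → V * U = 1)
    (p q : Type*) [Fintype p] [DecidableEq p] [Fintype q] [DecidableEq q]
    (A : Matrix p p R) (B : Matrix p q R) (D : Matrix q q R)
    (hG : IsUnit (Matrix.fromBlocks A B 0 D)) :
    IsUnit A ∧ IsUnit D ∧
      Ring.inverse (Matrix.fromBlocks A B 0 D) =
        Matrix.fromBlocks (Ring.inverse A) (-(Ring.inverse A * B * Ring.inverse D)) 0
          (Ring.inverse D) := by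
  obtain ⟨u, hu⟩ := hG
  set G := Matrix.fromBlocks A B 0 D with hGdef
  set H : Matrix (p ⊕ q) (p ⊕ q) R := Units.val u⁻¹ with hH
  have hGH : G * H = 1 := by rw [← hu, hH]; exact u.mul_inv
  have hHG : H * G = 1 := by rw [← hu, hH]; exact u.inv_mul
  set W := H.toBlocks₁₁ with hW
  set X := H.toBlocks₁₂ with hX
  set Y := H.toBlocks₂₁ with hY
  set Z := H.toBlocks₂₂ with hZ
  have hHblocks : H = Matrix.fromBlocks W X Y Z := (Matrix.fromBlocks_toBlocks H).symm
  rw [hHblocks] at hGH hHG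
  rw [hGdef] at hGH hHG
  rw [Matrix.fromBlocks_multiply, ← Matrix.fromBlocks_one] at hGH hHG
  have e11 : A * W + B * Y = 1 := (Matrix.fromBlocks_inj.mp hGH).1
  have e12 : A * X + B * Z = 0 := (Matrix.fromBlocks_inj.mp hGH).2.1
  have e21 : (0 : Matrix q p R) * W + D * Y = 0 := (Matrix.fromBlocks_inj.mp hGH).2.2.1
  have e22 : (0 : Matrix q p R) * X + D * Z = 1 := (Matrix.fromBlocks_inj.mp hGH).2.2.2
  have f11 : W * A + X * (0 : Matrix q p R) = 1 := (Matrix.fromBlocks_inj.mp hHG).1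
  simp only [Matrix.zero_mul, zero_add, Matrix.mul_zero, add_zero] at e21 e22 f11
  -- D is a unit with two-sided inverse Z
  have hZD : Z * D = 1 := sf_general R hsf q D Z e22
  have hY0 : Y = 0 := by
    calc Y = (Z * D) * Y := by rw [hZD, Matrix.one_mul]
    _ = Z * (D * Y) := by rw [Matrix.mul_assoc]
    _ = 0 := by rw [e21, Matrix.mul_zero]
  have hAW : A * W = 1 := by
    rw [hY0, Matrix.mul_zero, add_zero] at e11; exact e11
  have uA : IsUnit A := ⟨⟨A, W, hAW, f11⟩, rfl⟩
  have uD : IsUnit D := ⟨⟨D, Z, e22, hZD⟩, rfl⟩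
  have hinvA : Ring.inverse A = W := by
    calc Ring.inverse A = Ring.inverse A * (A * W) := by rw [hAW, Matrix.mul_one]
    _ = (Ring.inverse A * A) * W := by rw [Matrix.mul_assoc]
    _ = W := by rw [Ring.inverse_mul_cancel A uA, Matrix.one_mul]
  have hinvD : Ring.inverse D = Z := by
    calc Ring.inverse D = Ring.inverse D * (D * Z) := by rw [e22, Matrix.mul_one]
    _ = (Ring.inverse D * D) * Z := by rw [Matrix.mul_assoc]
    _ = Z := by rw [Ring.inverse_mul_cancel D uD, Matrix.one_mul]
  have hXeq : X = -(W * B * Z) := by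
    have : A * X = -(B * Z) := by
      exact (neg_eq_of_add_eq_zero_left e12).symm
    calc X = (W * A) * X := by rw [f11, Matrix.one_mul]
    _ = W * (A * X) := by rw [Matrix.mul_assoc]
    _ = W * -(B * Z) := by rw [this]
    _ = -(W * B * Z) := by rw [Matrix.mul_neg, Matrix.mul_assoc]
  refine ⟨uA, uD, ?_⟩
  rw [← hu, Ring.inverse_unit, ← hH, hHblocks, hinvA, hinvD, hY0, hXeq]
end

section
/- Let R be a stably finite unital ring and let d₁, d₂, d₃, k, l be finite index types. Let G be the square block matrix of size d₁ ⊕ d₂ ⊕ d₃ over R which is block upper triangular, i.e., G = [[G₁₁, G₁₂, G₁₃], [0, G₂₂, G₂₃], [0, 0, G₃₃]] with G_{ij} ∈ M_{d_i×d_j}(R). If G is invertible, then G₁₁, G₂₂ and G₃₃ are invertible, and for all matrices C ∈ M_{k×d₂}(R), C₂ ∈ M_{k×d₃}(R), B₁ ∈ M_{d₁×l}(R), B ∈ M_{d₂×l}(R), one has [0, C, C₂] · G⁻¹ · [B₁; B; 0] = C · G₂₂⁻¹ · B, where [0, C, C₂] denotes the k × (d₁ ⊕ d₂ ⊕ d₃)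 block row and [B₁; B; 0] the (d₁ ⊕ d₂ ⊕ d₃) × l block column. -/
/-!
If `G = [[A, B], [0, D]]` is invertible, reading off blocks of `G⁻¹ G = 1` and `G G⁻¹ = 1` gives
a left inverse of `A` and a right inverse of `D`; stable finiteness makes them two-sided. Then
`G⁻¹ = [[A⁻¹, -A⁻¹ B D⁻¹], [0, D⁻¹]]`, so a zero lower block of the column only sees `A⁻¹`, and a
zero left block of the row only sees `D⁻¹`. Applied to the splittings `(d₁ ⊕ d₂) ⊕ d₃` and then
`d₁ ⊕ d₂`, this compresses `G⁻¹` to `G₂₂⁻¹`.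
-/

namespace Matrix

variable {R : Type*} [Ring R] {m n : Type*} [Fintype m] [DecidableEq m] [Fintype n] [DecidableEq n]

theorem isUnit_and_isUnit_of_isUnit_fromBlocks_zero₂₁ [IsDedekindFiniteMonoid (Matrix m m R)]
    [IsDedekindFiniteMonoid (Matrix n n R)] {A : Matrix m m R} {B : Matrix m n R}
    {D : Matrix n n R} (hG : IsUnit (fromBlocks A B 0 D)) : IsUnit A ∧ IsUnit D := by
  obtain ⟨u, hu⟩ := hG
  have hNG := u.inv_mul
  have hGN := u.mul_inv
  rw [hu, ← fromBlocks_toBlocks (↑u⁻¹ : Matrix (m ⊕ n) (m ⊕ n) R), fromBlocks_multiply,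
    ← fromBlocks_one, fromBlocks_inj] at hNG hGN
  obtain ⟨hA, -⟩ := hNG
  obtain ⟨-, -, -, hD⟩ := hGN
  rw [Matrix.mul_zero, add_zero] at hA
  rw [Matrix.zero_mul, zero_add] at hD
  exact ⟨.of_mul_eq_one_right _ hA, .of_mul_eq_one _ hD⟩

theorem ringInverse_fromBlocks_zero₂₁ {A : Matrix m m R} {B : Matrix m n R} {D : Matrix n n R}
    (hA : IsUnit A) (hD : IsUnit D) :
    Ring.inverse (fromBlocks A B 0 D) =
      fromBlocks (Ring.inverse A) (-(Ring.inverse A * B * Ring.inverse D)) 0 (Ring.inverse D) := by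
  let X := fromBlocks (Ring.inverse A) (-(Ring.inverse A * B * Ring.inverse D)) 0 (Ring.inverse D)
  have hGX : fromBlocks A B 0 D * X = 1 := by
    simp [X, fromBlocks_multiply, ← fromBlocks_one, ← Matrix.mul_assoc,
      Ring.mul_inverse_cancel _ hA, Ring.mul_inverse_cancel _ hD]
  have hXG : X * fromBlocks A B 0 D = 1 := by
    simp [X, fromBlocks_multiply, ← fromBlocks_one, Matrix.mul_assoc,
      Ring.inverse_mul_cancel _ hA, Ring.inverse_mul_cancel _ hD]
  exact Ring.inverse_unit ⟨_, X, hGX, hXG⟩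

variable {k l : Type*}

theorem fromCols_mul_ringInverse_fromBlocks_zero₂₁_mul_fromRows_zero {A : Matrix m m R}
    {B : Matrix m n R} {D : Matrix n n R} (hA : IsUnit A) (hD : IsUnit D)
    (X : Matrix k m R) (Y : Matrix k n R) (Z : Matrix m l R) :
    fromCols X Y * Ring.inverse (fromBlocks A B 0 D) * fromRows Z (0 : Matrix n l R) =
      X * Ring.inverse A * Z := by
  rw [ringInverse_fromBlocks_zero₂₁ hA hD, fromCols_mul_fromBlocks, fromCols_mul_fromRows]
  simp

theorem fromCols_zero_mul_ringInverse_fromBlocks_zero₂₁_mul_fromRows {A : Matrix m m R}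
    {B : Matrix m n R} {D : Matrix n n R} (hA : IsUnit A) (hD : IsUnit D)
    (Y : Matrix k n R) (Z : Matrix m l R) (W : Matrix n l R) :
    fromCols (0 : Matrix k m R) Y * Ring.inverse (fromBlocks A B 0 D) * fromRows Z W =
      Y * Ring.inverse D * W := by
  rw [ringInverse_fromBlocks_zero₂₁ hA hD, fromCols_mul_fromBlocks, fromCols_mul_fromRows]
  simp

end Matrix

open Matrix

theorem stmt_7_general (R : Type*) [Ring R]
    (hsf : ∀ (j : ℕ) (U V : Matrix (Fin j) (Fin j) R), U * V = 1 → V * U = 1)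
    (d₁ d₂ d₃ k l : Type*) [Fintype d₁] [DecidableEq d₁] [Fintype d₂] [DecidableEq d₂]
    [Fintype d₃] [DecidableEq d₃]
    (G₁₁ : Matrix d₁ d₁ R) (G₁₂ : Matrix d₁ d₂ R) (G₁₃ : Matrix d₁ d₃ R)
    (G₂₂ : Matrix d₂ d₂ R) (G₂₃ : Matrix d₂ d₃ R) (G₃₃ : Matrix d₃ d₃ R)
    (hG : IsUnit (Matrix.fromBlocks (Matrix.fromBlocks G₁₁ G₁₂ 0 G₂₂)
        (Matrix.fromRows G₁₃ G₂₃) 0 G₃₃)) :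
    IsUnit G₁₁ ∧ IsUnit G₂₂ ∧ IsUnit G₃₃ ∧
      ∀ (C : Matrix k d₂ R) (C₂ : Matrix k d₃ R) (B₁ : Matrix d₁ l R) (B : Matrix d₂ l R),
        Matrix.fromCols (Matrix.fromCols (0 : Matrix k d₁ R) C) C₂ *
            Ring.inverse (Matrix.fromBlocks (Matrix.fromBlocks G₁₁ G₁₂ 0 G₂₂)
              (Matrix.fromRows G₁₃ G₂₃) 0 G₃₃) *
            Matrix.fromRows (Matrix.fromRows B₁ B) (0 : Matrix d₃ l R) =
          C * Ring.inverse G₂₂ * B := by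
  have : IsStablyFiniteRing R := ⟨fun j => ⟨hsf j _ _⟩⟩
  obtain ⟨h₁₂, h₃₃⟩ := isUnit_and_isUnit_of_isUnit_fromBlocks_zero₂₁ hG
  obtain ⟨h₁₁, h₂₂⟩ := isUnit_and_isUnit_of_isUnit_fromBlocks_zero₂₁ h₁₂
  refine ⟨h₁₁, h₂₂, h₃₃, fun C C₂ B₁ B => ?_⟩
  rw [fromCols_mul_ringInverse_fromBlocks_zero₂₁_mul_fromRows_zero h₁₂ h₃₃,
    fromCols_zero_mul_ringInverse_fromBlocks_zero₂₁_mul_fromRows h₁₁ h₂₂]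

/-- Over a stably finite ring, an invertible block 3×3 upper-triangular matrix has invertible
diagonal blocks, and the compression `[0, C, C₂] · G⁻¹ · [B₁; B; 0]` equals `C · G₂₂⁻¹ · B`. -/
theorem stmt_7 (R : Type*) [Ring R]
    (hsf : ∀ (j : ℕ) (U V : Matrix (Fin j) (Fin j) R), U * V = 1 → V * U = 1)
    (d₁ d₂ d₃ k l : Type*) [Fintype d₁] [DecidableEq d₁] [Fintype d₂] [DecidableEq d₂]
    [Fintype d₃] [DecidableEq d₃] [Fintype k] [Fintype l]
    (G₁₁ : Matrix d₁ d₁ R) (G₁₂ : Matrix d₁ d₂ R) (G₁₃ : Matrix d₁ d₃ R)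
    (G₂₂ : Matrix d₂ d₂ R) (G₂₃ : Matrix d₂ d₃ R) (G₃₃ : Matrix d₃ d₃ R)
    (hG : IsUnit (Matrix.fromBlocks (Matrix.fromBlocks G₁₁ G₁₂ 0 G₂₂)
        (Matrix.fromRows G₁₃ G₂₃) 0 G₃₃)) :
    IsUnit G₁₁ ∧ IsUnit G₂₂ ∧ IsUnit G₃₃ ∧
      ∀ (C : Matrix k d₂ R) (C₂ : Matrix k d₃ R) (B₁ : Matrix d₁ l R) (B : Matrix d₂ l R),
        Matrix.fromCols (Matrix.fromCols (0 : Matrix k d₁ R) C) C₂ *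
            Ring.inverse (Matrix.fromBlocks (Matrix.fromBlocks G₁₁ G₁₂ 0 G₂₂)
              (Matrix.fromRows G₁₃ G₂₃) 0 G₃₃) *
            Matrix.fromRows (Matrix.fromRows B₁ B) (0 : Matrix d₃ l R) =
          C * Ring.inverse G₂₂ * B :=
  stmt_7_general R hsf d₁ d₂ d₃ k l G₁₁ G₁₂ G₁₃ G₂₂ G₂₃ G₃₃ hG
end

section
/- Let 𝒜 be a unital associative algebra over ℂ and g, d, d₁, d₂ ∈ ℕ. Let J, J̃, A₁,…,A_g, Ã₁,…,Ã_g ∈ M_d(ℂ) with J² = I and J̃² = I, let B₀, B̃₀ ∈ M_{d×d₂}(ℂ), C, C̃ ∈ M_{d₁×d}(ℂ), D ∈ M_{d₁×d₂}(ℂ), and let S ∈ M_d(ℂ) be invertible with S·J·A_j = J̃·Ã_j·S for all j, S·J·B₀ = J̃·B̃₀, and C = C̃·S. For X = (X₁,…,X_g) ∈ 𝒜^g define Λ(X) := J ⊗ 1 − L_A(X) ∈ M_d(𝒜) and Λ̃(X) := J̃ ⊗ 1 − L_Ã(X) ∈ M_d(𝒜). Then Λ(X) is invertible in M_d(𝒜)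 if and only if Λ̃(X) is invertible; and in that case D ⊗ 1 + (C ⊗ 1)·Λ(X)⁻¹·(B₀ ⊗ 1) = D ⊗ 1 + (C̃ ⊗ 1)·Λ̃(X)⁻¹·(B̃₀ ⊗ 1) in M_{d₁×d₂}(𝒜). -/
open Matrix

private lemma smul_mul_algebraMap {𝒜 : Type*} [Ring 𝒜] [Algebra ℂ 𝒜] (c c' : ℂ) (x : 𝒜) :
    (c • x) * algebraMap ℂ 𝒜 c' = (c * c') • x := by
  rw [smul_mul_assoc, ← Algebra.commutes, ← Algebra.smul_def, smul_smul]

private lemma algebraMap_mul_smul {𝒜 : Type*} [Ring 𝒜] [Algebra ℂ 𝒜] (c c' : ℂ) (x : 𝒜) :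
    algebraMap ℂ 𝒜 c * (c' • x) = (c * c') • x := by
  rw [← Algebra.smul_def, smul_smul]

private lemma mulL {𝒜 : Type*} [Ring 𝒜] [Algebra ℂ 𝒜] {g d : ℕ}
    (M : Matrix (Fin d) (Fin d) ℂ) (A : Fin g → Matrix (Fin d) (Fin d) ℂ) (X : Fin g → 𝒜) :
    M.map ⇑(algebraMap ℂ 𝒜) * (Matrix.of fun i k => ∑ j, A j i k • X j)
      = Matrix.of fun i k => ∑ j, (M * A j) i k • X j := by
  ext i k
  simp only [Matrix.mul_apply, Matrix.of_apply, Matrix.map_apply, Finset.mul_sum,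
    Finset.sum_smul, algebraMap_mul_smul]
  rw [Finset.sum_comm]

private lemma mulR' {𝒜 : Type*} [Ring 𝒜] [Algebra ℂ 𝒜] {g d : ℕ}
    (M : Matrix (Fin d) (Fin d) ℂ) (A : Fin g → Matrix (Fin d) (Fin d) ℂ) (X : Fin g → 𝒜) :
    (Matrix.of fun i k => ∑ j, A j i k • X j) * M.map ⇑(algebraMap ℂ 𝒜)
      = Matrix.of fun i k => ∑ j, (A j * M) i k • X j := by
  ext i k
  simp only [Matrix.mul_apply, Matrix.of_apply, Matrix.map_apply, Finset.sum_mul,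
    Finset.sum_smul, smul_mul_algebraMap]
  rw [Finset.sum_comm]

/-- Similar descriptor realizations have the same 𝒜-domain and take the same values there. -/
theorem stmt_8 (𝒜 : Type*) [Ring 𝒜] [Algebra ℂ 𝒜] (g d d₁ d₂ : ℕ)
    (J Jt : Matrix (Fin d) (Fin d) ℂ) (A At : Fin g → Matrix (Fin d) (Fin d) ℂ)
    (B₀ Bt₀ : Matrix (Fin d) (Fin d₂) ℂ) (C Ct : Matrix (Fin d₁) (Fin d) ℂ)
    (D : Matrix (Fin d₁) (Fin d₂) ℂ)
    (hJ : J * J = 1) (hJt : Jt * Jt = 1)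
    (S : Matrix (Fin d) (Fin d) ℂ) (hS : IsUnit S)
    (hSA : ∀ j, S * (J * A j) = Jt * At j * S)
    (hSB : S * (J * B₀) = Jt * Bt₀)
    (hC : C = Ct * S)
    (X : Fin g → 𝒜) :
    let Λ : Matrix (Fin d) (Fin d) 𝒜 :=
      J.map ⇑(algebraMap ℂ 𝒜) - Matrix.of fun i k => ∑ j, A j i k • X j
    let Λt : Matrix (Fin d) (Fin d) 𝒜 :=
      Jt.map ⇑(algebraMap ℂ 𝒜) - Matrix.of fun i k => ∑ j, At j i k • X j
    (IsUnit Λ ↔ IsUnit Λt) ∧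
      (IsUnit Λ →
        D.map ⇑(algebraMap ℂ 𝒜) +
            C.map ⇑(algebraMap ℂ 𝒜) * Ring.inverse Λ * B₀.map ⇑(algebraMap ℂ 𝒜) =
          D.map ⇑(algebraMap ℂ 𝒜) +
            Ct.map ⇑(algebraMap ℂ 𝒜) * Ring.inverse Λt * Bt₀.map ⇑(algebraMap ℂ 𝒜)) := by
  intro Λ Λt
  set φ : ℂ →+* 𝒜 := algebraMap ℂ 𝒜 with hφ
  obtain ⟨Sᵤ, rfl⟩ := hS
  set S : Matrix (Fin d) (Fin d) ℂ := (Sᵤ : Matrix (Fin d) (Fin d) ℂ) with hSdef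
  set Si : Matrix (Fin d) (Fin d) ℂ :=
    ((Sᵤ⁻¹ : (Matrix (Fin d) (Fin d) ℂ)ˣ) : Matrix (Fin d) (Fin d) ℂ) with hSidef
  have hSSi : S * Si = 1 := Sᵤ.mul_inv
  have hSiS : Si * S = 1 := Sᵤ.inv_mul
  have mapmul : ∀ (M N : Matrix (Fin d) (Fin d) ℂ),
      (M * N).map ⇑φ = M.map ⇑φ * N.map ⇑φ := fun M N => Matrix.map_mul
  have mapone : (1 : Matrix (Fin d) (Fin d) ℂ).map ⇑φ = 1 :=
    Matrix.map_one _ (map_zero φ) (map_one φ)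
  have hJφ : J.map ⇑φ * J.map ⇑φ = 1 := by rw [← mapmul, hJ, mapone]
  have hJtφ : Jt.map ⇑φ * Jt.map ⇑φ = 1 := by rw [← mapmul, hJt, mapone]
  have hSφ : S.map ⇑φ * Si.map ⇑φ = 1 := by rw [← mapmul, hSSi, mapone]
  have hSiφ : Si.map ⇑φ * S.map ⇑φ = 1 := by rw [← mapmul, hSiS, mapone]
  -- key intertwining identity
  have key : S.map ⇑φ * (J.map ⇑φ * Λ) = Jt.map ⇑φ * Λt * S.map ⇑φ := by
    show S.map ⇑φ * (J.map ⇑φ *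
        (J.map ⇑φ - Matrix.of fun i k => ∑ j, A j i k • X j)) =
      Jt.map ⇑φ * (Jt.map ⇑φ - Matrix.of fun i k => ∑ j, At j i k • X j) * S.map ⇑φ
    simp only [mul_sub, sub_mul]
    rw [hJφ, mul_one, hJtφ, one_mul, ← mul_assoc, ← mapmul, mulL, mulL, mulR']
    congr 1
    ext i k
    simp only [Matrix.of_apply]
    refine Finset.sum_congr rfl fun j _ => ?_
    rw [mul_assoc, hSA j]
  have keyΛ : Λ = J.map ⇑φ * (Si.map ⇑φ * (Jt.map ⇑φ * Λt * S.map ⇑φ)) := by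
    rw [← key, ← mul_assoc (Si.map ⇑φ), hSiφ, one_mul, ← mul_assoc, hJφ, one_mul]
  have keyΛt : Λt = Jt.map ⇑φ * (S.map ⇑φ * (J.map ⇑φ * Λ)) * Si.map ⇑φ := by
    rw [key]
    calc Λt = (Jt.map ⇑φ * Jt.map ⇑φ) * Λt * (S.map ⇑φ * Si.map ⇑φ) := by
          rw [hJtφ, hSφ, one_mul, mul_one]
      _ = Jt.map ⇑φ * (Jt.map ⇑φ * Λt * S.map ⇑φ) * Si.map ⇑φ := by
          simp only [mul_assoc]
  have uJ : IsUnit (J.map ⇑φ) := ⟨⟨J.map ⇑φ, J.map ⇑φ, hJφ, hJφ⟩, rfl⟩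
  have uJt : IsUnit (Jt.map ⇑φ) := ⟨⟨Jt.map ⇑φ, Jt.map ⇑φ, hJtφ, hJtφ⟩, rfl⟩
  have uS : IsUnit (S.map ⇑φ) := ⟨⟨S.map ⇑φ, Si.map ⇑φ, hSφ, hSiφ⟩, rfl⟩
  have uSi : IsUnit (Si.map ⇑φ) := ⟨⟨Si.map ⇑φ, S.map ⇑φ, hSiφ, hSφ⟩, rfl⟩
  have iff1 : IsUnit Λ ↔ IsUnit Λt := by
    constructor
    · intro h
      rw [keyΛt]
      exact (uJt.mul ((uS.mul (uJ.mul h)))).mul uSi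
    · intro h
      rw [keyΛ]
      exact uJ.mul (uSi.mul ((uJt.mul h).mul uS))
  refine ⟨iff1, fun hU => ?_⟩
  have hUt : IsUnit Λt := iff1.mp hU
  -- compute Ring.inverse Λ
  have hinv : Ring.inverse Λ
      = Si.map ⇑φ * Ring.inverse Λt * (Jt.map ⇑φ * (S.map ⇑φ * J.map ⇑φ)) := by
    set b := Si.map ⇑φ * Ring.inverse Λt * (Jt.map ⇑φ * (S.map ⇑φ * J.map ⇑φ)) with hb
    have hΛb : Λ * b = 1 := by
      rw [keyΛ, hb]
      calc J.map ⇑φ * (Si.map ⇑φ * (Jt.map ⇑φ * Λt * S.map ⇑φ)) *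
            (Si.map ⇑φ * Ring.inverse Λt * (Jt.map ⇑φ * (S.map ⇑φ * J.map ⇑φ)))
          = J.map ⇑φ * Si.map ⇑φ * Jt.map ⇑φ * (Λt * (S.map ⇑φ * Si.map ⇑φ) * Ring.inverse Λt) *
              Jt.map ⇑φ * (S.map ⇑φ * J.map ⇑φ) := by simp only [mul_assoc]
        _ = J.map ⇑φ * Si.map ⇑φ * Jt.map ⇑φ * 1 * Jt.map ⇑φ * (S.map ⇑φ * J.map ⇑φ) := by
            rw [hSφ, mul_one, Ring.mul_inverse_cancel _ hUt]
        _ = J.map ⇑φ * (Si.map ⇑φ * ((Jt.map ⇑φ * Jt.map ⇑φ) * S.map ⇑φ)) * J.map ⇑φ := by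
            simp only [mul_assoc, mul_one]
        _ = 1 := by rw [hJtφ, one_mul, hSiφ, mul_one, hJφ]
    calc Ring.inverse Λ = Ring.inverse Λ * (Λ * b) := by rw [hΛb, mul_one]
      _ = (Ring.inverse Λ * Λ) * b := by rw [← mul_assoc]
      _ = b := by rw [Ring.inverse_mul_cancel _ hU, one_mul]
  congr 1
  rw [hinv, hC]
  have hCmap : (Ct * S).map ⇑φ = Ct.map ⇑φ * S.map ⇑φ := Matrix.map_mul
  have hB : Jt.map ⇑φ * (S.map ⇑φ * (J.map ⇑φ * B₀.map ⇑φ)) = Bt₀.map ⇑φ := by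
    rw [← Matrix.map_mul, ← Matrix.map_mul, hSB, ← Matrix.map_mul, ← Matrix.mul_assoc, hJt, Matrix.one_mul]
  calc (Ct * S).map ⇑φ * (Si.map ⇑φ * Ring.inverse Λt * (Jt.map ⇑φ * (S.map ⇑φ * J.map ⇑φ))) *
        B₀.map ⇑φ
      = Ct.map ⇑φ * (S.map ⇑φ * Si.map ⇑φ) * Ring.inverse Λt *
          (Jt.map ⇑φ * (S.map ⇑φ * (J.map ⇑φ * B₀.map ⇑φ))) := by
        rw [hCmap]; simp only [Matrix.mul_assoc]
    _ = Ct.map ⇑φ * Ring.inverse Λt * Bt₀.map ⇑φ := by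
        rw [hSφ, Matrix.mul_one, hB]
end

section
/- Let 𝒜 be a unital ring and n₁, n₂ ∈ ℕ. Let u₁ ∈ M_{1×n₁}(𝒜), v₁ ∈ M_{n₁×1}(𝒜), u₂ ∈ M_{1×n₂}(𝒜), v₂ ∈ M_{n₂×1}(𝒜), and let Q₁ ∈ M_{n₁×n₁}(𝒜), Q₂ ∈ M_{n₂×n₂}(𝒜) be invertible. Then the block matrix Q := [[v₁·u₂, Q₁], [Q₂, 0]] of size (n₁+n₂) is invertible with Q⁻¹ = [[0, Q₂⁻¹], [Q₁⁻¹, −Q₁⁻¹·v₁·u₂·Q₂⁻¹]], and −[0, u₁] · Q⁻¹ · [0; v₂] = (−u₁·Q₁⁻¹·v₁)·(−u₂·Q₂⁻¹·v₂) as 1×1 matrices over 𝒜, where [0, u₁] is the 1×(n₁+n₂) block row and [0; v₂] the (n₁+n₂)×1 block column. -/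
/-!
With `Q₁`, `Q₂` in the off-diagonal blocks, the inverse of `[[A, Q₁], [Q₂, 0]]` has `⅟Q₂`, `⅟Q₁`
off the diagonal and `-⅟Q₁ A ⅟Q₂` in the corner, as block multiplication shows. The zero blocks of
`[0, u₁]` and `[0; v₂]` pick out exactly that corner, so with `A = v₁ u₂` the quantity
`-[0, u₁] Q⁻¹ [0; v₂]` equals `u₁ ⅟Q₁ v₁ u₂ ⅟Q₂ v₂`, the product of the two representations.
-/

namespace Matrix

section AntidiagInverse

variable {α : Type*} [Ring α] {m n : Type*} [Fintype m] [Fintype n] [DecidableEq m] [DecidableEq n]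
  (A : Matrix m n α) (Q₁ : Matrix m m α) (Q₂ : Matrix n n α) [Invertible Q₁] [Invertible Q₂]

theorem fromBlocks_mul_fromBlocks_antidiag_invOf :
    fromBlocks A Q₁ Q₂ 0 * fromBlocks 0 (⅟Q₂) (⅟Q₁) (-(⅟Q₁ * A * ⅟Q₂)) = 1 := by
  rw [fromBlocks_multiply, ← fromBlocks_one]
  congr 1 <;> simp [Matrix.mul_assoc, Matrix.mul_invOf_cancel_left]

theorem fromBlocks_antidiag_invOf_mul_fromBlocks :
    fromBlocks 0 (⅟Q₂) (⅟Q₁) (-(⅟Q₁ * A * ⅟Q₂)) * fromBlocks A Q₁ Q₂ 0 = 1 := by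
  rw [fromBlocks_multiply, ← fromBlocks_one]
  congr 1 <;> simp [Matrix.mul_assoc]

end AntidiagInverse

theorem fromCols_zero_mul_fromBlocks_mul_fromRows_zero {α : Type*} [Ring α]
    {l m n p q r : Type*} [Fintype m] [Fintype n] [Fintype p] [Fintype q]
    (u : Matrix l m α) (A : Matrix n p α) (B : Matrix n q α) (C : Matrix m p α)
    (D : Matrix m q α) (v : Matrix q r α) :
    fromCols (0 : Matrix l n α) u * fromBlocks A B C D * fromRows (0 : Matrix p r α) v
      = u * D * v := by
  simp [fromCols_mul_fromBlocks, fromCols_mul_fromRows]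

end Matrix

open Matrix in
/-- The product rule for formal linear representations: the block matrix
`[[v₁u₂, Q₁],[Q₂, 0]]` is invertible with explicit inverse, and
`−[0,u₁]·Q⁻¹·[0;v₂] = (−u₁Q₁⁻¹v₁)·(−u₂Q₂⁻¹v₂)`. -/
theorem stmt_10 (𝒜 : Type*) [Ring 𝒜] (n₁ n₂ : ℕ)
    (u₁ : Matrix (Fin 1) (Fin n₁) 𝒜) (v₁ : Matrix (Fin n₁) (Fin 1) 𝒜)
    (u₂ : Matrix (Fin 1) (Fin n₂) 𝒜) (v₂ : Matrix (Fin n₂) (Fin 1) 𝒜)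
    (Q₁ : Matrix (Fin n₁) (Fin n₁) 𝒜) (Q₂ : Matrix (Fin n₂) (Fin n₂) 𝒜)
    [Invertible Q₁] [Invertible Q₂] :
    let Q : Matrix (Fin n₁ ⊕ Fin n₂) (Fin n₂ ⊕ Fin n₁) 𝒜 :=
      Matrix.fromBlocks (v₁ * u₂) Q₁ Q₂ 0
    let Qinv : Matrix (Fin n₂ ⊕ Fin n₁) (Fin n₁ ⊕ Fin n₂) 𝒜 :=
      Matrix.fromBlocks 0 (⅟Q₂) (⅟Q₁) (-(⅟Q₁ * v₁ * u₂ * ⅟Q₂))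
    Q * Qinv = 1 ∧ Qinv * Q = 1 ∧
      -(Matrix.fromCols (0 : Matrix (Fin 1) (Fin n₂) 𝒜) u₁ * Qinv *
        Matrix.fromRows (0 : Matrix (Fin n₁) (Fin 1) 𝒜) v₂) =
        -(u₁ * ⅟Q₁ * v₁) * -(u₂ * ⅟Q₂ * v₂) := by
  intro Q Qinv
  simp only [Q, Qinv, Matrix.mul_assoc (⅟Q₁) v₁ u₂]
  refine ⟨fromBlocks_mul_fromBlocks_antidiag_invOf _ _ _,
    fromBlocks_antidiag_invOf_mul_fromBlocks _ _ _, ?_⟩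
  rw [fromCols_zero_mul_fromBlocks_mul_fromRows_zero]
  simp only [Matrix.mul_neg, Matrix.neg_mul, neg_neg, Matrix.mul_assoc]
end

section
/- Let 𝒜 be a unital ring and n ∈ ℕ. Let Q ∈ M_{n×n}(𝒜) be invertible, u ∈ M_{1×n}(𝒜), v ∈ M_{n×1}(𝒜), and let s ∈ 𝒜 be the unique entry of the 1×1 matrix u·Q⁻¹·v. Then the block matrix Q̂ := [[0, u], [v, −Q]] of size 1+n is invertible if and only if s is invertible in 𝒜; and in that case the (1,1) entry of Q̂⁻¹ equals s⁻¹, so that −[1, 0]·Q̂⁻¹·[1; 0] = −(u·Q⁻¹·v)⁻¹ as 1×1 matrices over 𝒜. -/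
/-!
With `D = -Q` invertible, the LDU factorisation
`[[A, B], [C, D]] = [[1, B D⁻¹], [0, 1]] · [[A - B D⁻¹ C, 0], [0, D]] · [[1, 0], [D⁻¹ C, 1]]`
shows that `Q̂` is a unit as soon as its Schur complement `0 - u (-Q)⁻¹ v = u Q⁻¹ v` is.
Conversely, the block equations of `Q̂⁻¹ Q̂ = 1 = Q̂ Q̂⁻¹` force the top-left block of `Q̂⁻¹` to be
a two-sided inverse of the Schur complement; over a noncommutative ring a one-sided inverse of a
matrix need not be two-sided, so both equations are needed.
-/

theorem MulEquiv.map_ringInverse {M N : Type*} [MonoidWithZero M] [MonoidWithZero N]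
    (e : M ≃* N) (x : M) : Ring.inverse (e x) = e (Ring.inverse x) := by
  by_cases hx : IsUnit x
  · obtain ⟨u, rfl⟩ := hx
    change Ring.inverse (Units.map (e : M →* N) u : N) = _
    rw [Ring.inverse_unit, Ring.inverse_unit]
    rfl
  · rw [Ring.inverse_non_unit _ hx, Ring.inverse_non_unit _ (by simpa using hx), map_zero]

namespace Matrix

variable {R : Type*} [Ring R] {l m n : Type*} [Fintype l] [Fintype m] [Fintype n] [DecidableEq m]

theorem fromCols_one_zero_mul_mul_fromRows_one_zero (N : Matrix (m ⊕ n) (m ⊕ n) R) :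
    Matrix.fromCols (1 : Matrix m m R) (0 : Matrix m n R) * N *
      Matrix.fromRows (1 : Matrix m m R) (0 : Matrix n m R) = N.toBlocks₁₁ := by
  rw [← fromBlocks_toBlocks N, fromCols_mul_fromBlocks, fromCols_mul_fromRows]
  simp

variable [DecidableEq l] [DecidableEq n]

theorem isUnit_fromBlocks_one_zero₂₁_one (X : Matrix m n R) :
    IsUnit (fromBlocks 1 X 0 1 : Matrix (m ⊕ n) (m ⊕ n) R) :=
  ⟨⟨fromBlocks 1 X 0 1, fromBlocks 1 (-X) 0 1, by simp [fromBlocks_multiply],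
    by simp [fromBlocks_multiply]⟩, rfl⟩

theorem isUnit_fromBlocks_one_zero₁₂_one (Y : Matrix n m R) :
    IsUnit (fromBlocks 1 0 Y 1 : Matrix (m ⊕ n) (m ⊕ n) R) :=
  ⟨⟨fromBlocks 1 0 Y 1, fromBlocks 1 0 (-Y) 1, by simp [fromBlocks_multiply],
    by simp [fromBlocks_multiply]⟩, rfl⟩

theorem _root_.IsUnit.fromBlocks_zero₁₂_zero₂₁ {A : Matrix m m R} {D : Matrix n n R}
    (hA : IsUnit A) (hD : IsUnit D) : IsUnit (fromBlocks A 0 0 D) := by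
  obtain ⟨A, rfl⟩ := hA
  obtain ⟨D, rfl⟩ := hD
  exact ⟨⟨fromBlocks A 0 0 D, fromBlocks ↑A⁻¹ 0 0 ↑D⁻¹, by simp [fromBlocks_multiply],
    by simp [fromBlocks_multiply]⟩, rfl⟩

theorem fromBlocks_eq_ldu_of_invertible₂₂ (A : Matrix l m R) (B : Matrix l n R)
    (C : Matrix n m R) (D : Matrix n n R) [Invertible D] :
    fromBlocks A B C D =
      (fromBlocks 1 (B * ⅟D) 0 1 : Matrix (l ⊕ n) (l ⊕ n) R) *
        fromBlocks (A - B * ⅟D * C) 0 0 D *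
          (fromBlocks 1 0 (⅟D * C) 1 : Matrix (m ⊕ n) (m ⊕ n) R) := by
  simp [fromBlocks_multiply, Matrix.mul_assoc, Matrix.mul_invOf_cancel_left]

section Schur

variable {A : Matrix m m R} {B : Matrix m n R} {C : Matrix n m R} {D : Matrix n n R} [Invertible D]

theorem isUnit_fromBlocks_of_isUnit_schur_s11 (h : IsUnit (A - B * ⅟D * C)) :
    IsUnit (fromBlocks A B C D) := by
  rw [fromBlocks_eq_ldu_of_invertible₂₂]
  exact ((isUnit_fromBlocks_one_zero₂₁_one _).mul
    (h.fromBlocks_zero₁₂_zero₂₁ (isUnit_of_invertible D))).mul (isUnit_fromBlocks_one_zero₁₂_one _)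

@[reducible]
noncomputable def invertibleSchurOfIsUnitFromBlocks (h : IsUnit (fromBlocks A B C D)) :
    Invertible (A - B * ⅟D * C) :=
  let P := Ring.inverse (fromBlocks A B C D)
  have hP : P.toBlocks₁₁ * (A - B * ⅟D * C) = 1 ∧ (A - B * ⅟D * C) * P.toBlocks₁₁ = 1 := by
    have hPM : P * fromBlocks A B C D = 1 := Ring.inverse_mul_cancel _ h
    have hMP : fromBlocks A B C D * P = 1 := Ring.mul_inverse_cancel _ h
    rw [← fromBlocks_toBlocks P, fromBlocks_multiply, ← fromBlocks_one, fromBlocks_inj] at hPM hMP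
    obtain ⟨hPM₁₁, hPM₁₂, -, -⟩ := hPM
    obtain ⟨hMP₁₁, -, hMP₂₁, -⟩ := hMP
    have hP₁₂ : P.toBlocks₁₂ = -(P.toBlocks₁₁ * B) * ⅟D :=
      Matrix.mul_right_eq_iff_eq_mul_invOf.mp (eq_neg_of_add_eq_zero_right hPM₁₂)
    have hP₂₁ : P.toBlocks₂₁ = ⅟D * -(C * P.toBlocks₁₁) :=
      Matrix.mul_left_eq_iff_eq_invOf_mul.mp (eq_neg_of_add_eq_zero_right hMP₂₁)
    constructor
    · rw [← hPM₁₁, hP₁₂]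
      simp only [sub_eq_add_neg, Matrix.mul_add, Matrix.mul_neg, Matrix.neg_mul, Matrix.mul_assoc]
    · rw [← hMP₁₁, hP₂₁]
      simp only [sub_eq_add_neg, Matrix.add_mul, Matrix.mul_neg, Matrix.neg_mul, Matrix.mul_assoc]
  ⟨P.toBlocks₁₁, hP.1, hP.2⟩

theorem isUnit_fromBlocks_iff_isUnit_schur :
    IsUnit (fromBlocks A B C D) ↔ IsUnit (A - B * ⅟D * C) :=
  ⟨fun h => letI := invertibleSchurOfIsUnitFromBlocks h; isUnit_of_invertible _,
    isUnit_fromBlocks_of_isUnit_schur_s11⟩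

theorem toBlocks₁₁_ringInverse_fromBlocks (h : IsUnit (fromBlocks A B C D)) :
    (Ring.inverse (fromBlocks A B C D)).toBlocks₁₁ = Ring.inverse (A - B * ⅟D * C) := by
  let := invertibleSchurOfIsUnitFromBlocks h
  rw [Ring.inverse_invertible (A - B * ⅟D * C)]
  rfl

end Schur

end Matrix

open Matrix

/-- The inversion rule for formal linear representations: `[[0,u],[v,−Q]]` is invertible iff
the entry `s` of `u·Q⁻¹·v` is, and in that case the `(1,1)` entry of the inverse is `s⁻¹`,
so that `−[1,0]·Q̂⁻¹·[1;0] = −(u·Q⁻¹·v)⁻¹`. -/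
theorem stmt_11 (𝒜 : Type*) [Ring 𝒜] (n : ℕ)
    (Q : Matrix (Fin n) (Fin n) 𝒜) [Invertible Q]
    (u : Matrix (Fin 1) (Fin n) 𝒜) (v : Matrix (Fin n) (Fin 1) 𝒜) :
    let s : 𝒜 := (u * ⅟Q * v) 0 0
    let Qhat : Matrix (Fin 1 ⊕ Fin n) (Fin 1 ⊕ Fin n) 𝒜 := Matrix.fromBlocks 0 u v (-Q)
    (IsUnit Qhat ↔ IsUnit s) ∧
      (IsUnit s →
        Ring.inverse Qhat (Sum.inl 0) (Sum.inl 0) = Ring.inverse s ∧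
          -(Matrix.fromCols (1 : Matrix (Fin 1) (Fin 1) 𝒜) (0 : Matrix (Fin 1) (Fin n) 𝒜) * Ring.inverse Qhat *
              Matrix.fromRows (1 : Matrix (Fin 1) (Fin 1) 𝒜) (0 : Matrix (Fin n) (Fin 1) 𝒜)) =
            -Ring.inverse (u * ⅟Q * v)) := by
  intro s Qhat
  let := invertibleNeg Q
  have hschur : 0 - u * ⅟(-Q) * v = u * ⅟Q * v := by
    rw [invOf_neg, zero_sub, Matrix.mul_neg, Matrix.neg_mul, neg_neg]
  let e : Matrix (Fin 1) (Fin 1) 𝒜 ≃+* 𝒜 := uniqueRingEquiv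
  have hs : IsUnit (u * ⅟Q * v) ↔ IsUnit s := (isUnit_map_iff e _).symm
  have hQhat : IsUnit Qhat ↔ IsUnit s :=
    (hschur ▸ isUnit_fromBlocks_iff_isUnit_schur : IsUnit Qhat ↔ _).trans hs
  refine ⟨hQhat, fun h => ?_⟩
  have hinv : (Ring.inverse Qhat).toBlocks₁₁ = Ring.inverse (u * ⅟Q * v) :=
    hschur ▸ toBlocks₁₁_ringInverse_fromBlocks (hQhat.mpr h)
  refine ⟨?_, by rw [fromCols_one_zero_mul_mul_fromRows_one_zero, hinv]⟩
  change (Ring.inverse Qhat).toBlocks₁₁ 0 0 = Ring.inverse (e (u * ⅟Q * v))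
  rw [hinv]
  exact (e.toMulEquiv.map_ringInverse _).symm
end

section
/- Let 𝒜 be a unital ⋆-algebra over ℂ (so that the star operation is conjugate-linear with respect to the ℂ-action) and n ∈ ℕ. Let Q ∈ M_{n×n}(𝒜) be invertible, u ∈ M_{1×n}(𝒜), and v ∈ M_{n×1}(𝒜); denote by M* the conjugate transpose of a matrix M over 𝒜. Then the block matrix Q̂ := [[0, Q*], [Q, 0]] of size 2n is invertible with Q̂⁻¹ = [[0, Q⁻¹], [(Q*)⁻¹, 0]], and for the block column v̂ := [(1/2)•u*; v] ∈ M_{(2n)×1}(𝒜) one has −v̂*·Q̂⁻¹·v̂ = −(1/2)•(u·Q⁻¹·v + (u·Q⁻¹·v)*) as 1×1 matrices over 𝒜. In particular, if the unique entry of u·Q⁻¹·v is selfadjoint, then −v̂*·Q̂⁻¹·v̂ = −u·Q⁻¹·v. -/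
/-!
Since `[[0, Q*], [Q, 0]]` is anti-diagonal, its inverse is the anti-diagonal matrix built from the
inverses of its off-diagonal blocks. Against an anti-diagonal matrix, the quadratic form of
`v̂ = [(1/2)•u*; v]` pairs the first block row of `v̂*` with the second block of `v̂` and vice
versa, giving `(1/2)•(uQ⁻¹v)` plus its conjugate transpose.
-/

open Matrix

namespace Matrix

variable {l m n o : Type*} {R : Type*}

theorem fromBlocks_zero_mul_fromBlocks_zero [Fintype l] [Fintype m] [NonUnitalNonAssocSemiring R]
    (B : Matrix n m R) (C : Matrix o l R) (B' : Matrix l o R) (C' : Matrix m n R) :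
    fromBlocks 0 B C 0 * fromBlocks 0 B' C' 0 = fromBlocks (B * C') 0 0 (C * B') := by
  simp [fromBlocks_multiply]

theorem fromCols_mul_fromBlocks_zero_mul_fromRows [Fintype l] [Fintype m] [Semiring R]
    (a : Matrix o l R) (b : Matrix o m R) (P : Matrix l m R) (P' : Matrix m l R)
    (c : Matrix l n R) (d : Matrix m n R) :
    fromCols a b * fromBlocks 0 P P' 0 * fromRows c d = a * P * d + b * P' * c := by
  simp [Matrix.mul_assoc, fromBlocks_mul_fromRows, fromCols_mul_fromRows]

section Antidiagonal

variable [Fintype m] [DecidableEq m] [Ring R] [StarRing R] (Q : Matrix m m R) [Invertible Q]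

theorem fromBlocks_conjTranspose_mul_fromBlocks_invOf :
    fromBlocks 0 Qᴴ Q 0 * fromBlocks 0 (⅟Q) (⅟Q)ᴴ 0 = 1 := by
  rw [fromBlocks_zero_mul_fromBlocks_zero, ← conjTranspose_mul, invOf_mul_self, mul_invOf_self,
    conjTranspose_one, fromBlocks_one]

theorem fromBlocks_invOf_mul_fromBlocks_conjTranspose :
    fromBlocks 0 (⅟Q) (⅟Q)ᴴ 0 * fromBlocks 0 Qᴴ Q 0 = 1 := by
  rw [fromBlocks_zero_mul_fromBlocks_zero, ← conjTranspose_mul, invOf_mul_self, mul_invOf_self,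
    conjTranspose_one, fromBlocks_one]

end Antidiagonal

theorem conjTranspose_fromRows_mul_fromBlocks_zero_mul_fromRows {S : Type*} [Fintype m]
    [CommSemiring S] [StarRing S] [Semiring R] [StarRing R] [Algebra S R] [StarModule S R]
    {c : S} (hc : IsSelfAdjoint c) (X : Matrix m m R) (u : Matrix o m R) (v : Matrix m o R) :
    (fromRows (c • uᴴ) v)ᴴ * fromBlocks 0 X Xᴴ 0 * fromRows (c • uᴴ) v =
      c • (u * X * v + (u * X * v)ᴴ) := by
  rw [conjTranspose_fromRows_eq_fromCols_conjTranspose, conjTranspose_smul, hc.star_eq,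
    conjTranspose_conjTranspose, fromCols_mul_fromBlocks_zero_mul_fromRows, smul_add,
    conjTranspose_mul, conjTranspose_mul, Matrix.mul_assoc, Matrix.mul_assoc]
  simp only [Matrix.smul_mul, Matrix.mul_smul, Matrix.mul_assoc]

theorem isHermitian_of_unique [Unique n] [Star R] {M : Matrix n n R}
    (h : IsSelfAdjoint (M default default)) : M.IsHermitian := by
  ext i j
  rw [Unique.eq_default i, Unique.eq_default j]
  exact h

end Matrix

/-- The selfadjoint hermitization of a formal linear representation: `[[0,Q*],[Q,0]]` is
invertible with inverse `[[0,Q⁻¹],[(Q*)⁻¹,0]]`, and with `v̂ = [(1/2)•u*; v]` one has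
`−v̂*·Q̂⁻¹·v̂ = −(1/2)•(uQ⁻¹v + (uQ⁻¹v)*)`; if the entry of `uQ⁻¹v` is selfadjoint this
equals `−uQ⁻¹v`. -/
theorem stmt_12 (𝒜 : Type*) [Ring 𝒜] [Algebra ℂ 𝒜] [StarRing 𝒜] [StarModule ℂ 𝒜] (n : ℕ)
    (Q : Matrix (Fin n) (Fin n) 𝒜) [Invertible Q]
    (u : Matrix (Fin 1) (Fin n) 𝒜) (v : Matrix (Fin n) (Fin 1) 𝒜) :
    let Qhat : Matrix (Fin n ⊕ Fin n) (Fin n ⊕ Fin n) 𝒜 := Matrix.fromBlocks 0 Qᴴ Q 0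
    let Qhatinv : Matrix (Fin n ⊕ Fin n) (Fin n ⊕ Fin n) 𝒜 :=
      Matrix.fromBlocks 0 (⅟Q) ((⅟Q)ᴴ) 0
    let vhat : Matrix (Fin n ⊕ Fin n) (Fin 1) 𝒜 :=
      Matrix.fromRows (((1 : ℂ)/2) • uᴴ) v
    Qhat * Qhatinv = 1 ∧ Qhatinv * Qhat = 1 ∧
      -(vhatᴴ * Qhatinv * vhat) = -(((1 : ℂ)/2) • (u * ⅟Q * v + (u * ⅟Q * v)ᴴ)) ∧
      (IsSelfAdjoint ((u * ⅟Q * v) 0 0) →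
        -(vhatᴴ * Qhatinv * vhat) = -(u * ⅟Q * v)) := by
  intro Qhat Qhatinv vhat
  have hform : vhatᴴ * Qhatinv * vhat = ((1 : ℂ)/2) • (u * ⅟Q * v + (u * ⅟Q * v)ᴴ) :=
    conjTranspose_fromRows_mul_fromBlocks_zero_mul_fromRows (by simp [IsSelfAdjoint]) _ u v
  refine ⟨fromBlocks_conjTranspose_mul_fromBlocks_invOf Q,
    fromBlocks_invOf_mul_fromBlocks_conjTranspose Q, by rw [hform], fun hsa => ?_⟩
  rw [hform, (isHermitian_of_unique hsa).eq, ← two_smul ℂ, smul_smul]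
  norm_num
end

section
/- Let R be a unital ring and m a finite index type. If T, P ∈ M_{m×m}(R) satisfy T·P = 1, then the block matrix G := [[P, 1], [0, T]] of size m ⊕ m is invertible, with two-sided inverse W := [[T, −1], [1 − P·T, P]]. In particular, if additionally P·T ≠ 1, then G is an invertible block upper-triangular matrix whose diagonal blocks P and T are not invertible. -/
theorem stmt_18_aux {M : Type*} [Monoid M] {T P : M} (hTP : T * P = 1) :
    (IsUnit P → P * T = 1) ∧ (IsUnit T → P * T = 1) := by
  constructor
  · rintro ⟨u, rfl⟩
    have hT : T = ((u⁻¹ : Mˣ) : M) := by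
      have h1 : T * ((u : M) * ((u⁻¹ : Mˣ) : M)) = T := by rw [Units.mul_inv, mul_one]
      rw [← mul_assoc, hTP, one_mul] at h1
      exact h1.symm
    rw [hT, Units.mul_inv]
  · rintro ⟨u, rfl⟩
    have hP : P = ((u⁻¹ : Mˣ) : M) := by
      have h1 : (((u⁻¹ : Mˣ) : M) * (u : M)) * P = P := by rw [Units.inv_mul, one_mul]
      rw [mul_assoc, hTP, mul_one] at h1
      exact h1.symm
    rw [hP, Units.inv_mul]

/-- If `T·P = 1` then `G = [[P,1],[0,T]]` is invertible with inverse `[[T,−1],[1−PT,P]]`;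
if moreover `P·T ≠ 1`, then the diagonal blocks `P`, `T` of the invertible block
upper-triangular matrix `G` are not invertible. -/
theorem stmt_18 (R : Type*) [Ring R] (m : Type*) [Fintype m] [DecidableEq m]
    (T P : Matrix m m R) (hTP : T * P = 1) :
    let G : Matrix (m ⊕ m) (m ⊕ m) R := Matrix.fromBlocks P 1 0 T
    let W : Matrix (m ⊕ m) (m ⊕ m) R := Matrix.fromBlocks T (-1) (1 - P * T) P
    G * W = 1 ∧ W * G = 1 ∧ (P * T ≠ 1 → ¬IsUnit P ∧ ¬IsUnit T) := by
  intro G W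
  refine ⟨?_, ?_, ?_⟩
  · show Matrix.fromBlocks P 1 0 T * Matrix.fromBlocks T (-1) (1 - P * T) P = 1
    rw [Matrix.fromBlocks_multiply, ← Matrix.fromBlocks_one]
    congr 1 <;> noncomm_ring <;> simp [hTP, mul_assoc, ← mul_assoc, hTP]
  · show Matrix.fromBlocks T (-1) (1 - P * T) P * Matrix.fromBlocks P 1 0 T = 1
    rw [Matrix.fromBlocks_multiply, ← Matrix.fromBlocks_one]
    congr 1 <;> noncomm_ring <;> simp [hTP, mul_assoc, ← mul_assoc, hTP]
  · intro hPT
    exact ⟨fun h => hPT ((stmt_18_aux hTP).1 h), fun h => hPT ((stmt_18_aux hTP).2 h)⟩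
end
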